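/- arXiv:2309.04236 — 3 statements merged into one kernel-verified Lean document; each statement's English description precedes it below -/
import Mathlib

section
/- Let H be a real separable Hilbert space, let T and S be positive bounded linear operators on H, and let λ > 0. If ‖(T + λI)^{-1/2}(T − S)(T + λI)^{-1/2}‖ ≤ 1/4, then ‖(S + λI)^{-1/2}(T + λI)^{1/2}‖ ≤ 2√3/3. -/
/-!
Put `A = T + λ`, `B = S + λ`, `R = A^{-1/2} (A - B) A^{-1/2}` and `C = B^{-1/2} A^{1/2}`.
Then `A^{-1/2} B A^{-1/2} = 1 - R`, whose inverse is `A^{1/2} B⁻¹ A^{1/2} = C⋆C`.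
Since `‖R‖ ≤ 1/4`, writing that inverse as `e = 1 + R e` gives
`‖C‖² = ‖C⋆C‖ = ‖e‖ ≤ 1/(1 - ‖R‖) ≤ 4/3`.
-/

open ContinuousLinearMap

/-- Real powers of a (positive) bounded operator on a real Hilbert space, defined via the
continuous functional calculus. -/
noncomputable def opow {E : Type*} [NormedAddCommGroup E] [InnerProductSpace ℝ E]
    [CompleteSpace E]
    [ContinuousFunctionalCalculus ℝ (E →L[ℝ] E) (IsSelfAdjoint : (E →L[ℝ] E) → Prop)]
    (A : E →L[ℝ] E) (t : ℝ) : E →L[ℝ] E :=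
  cfc (fun x : ℝ => x ^ t) A

theorem norm_le_of_one_sub_mul_eq_one {R : Type*} [NormedRing R] {x e : R} (hx : ‖x‖ < 1)
    (he : (1 - x) * e = 1) : ‖e‖ ≤ ‖(1 : R)‖ / (1 - ‖x‖) := by
  have he' : e = 1 + x * e := by rw [sub_mul, one_mul, sub_eq_iff_eq_add] at he; exact he
  have hbound : ‖e‖ ≤ ‖(1 : R)‖ + ‖x‖ * ‖e‖ :=
    calc ‖e‖ = ‖1 + x * e‖ := congrArg norm he'
      _ ≤ ‖(1 : R)‖ + ‖x * e‖ := norm_add_le _ _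
      _ ≤ ‖(1 : R)‖ + ‖x‖ * ‖e‖ := by gcongr; exact norm_mul_le _ _
  rw [le_div_iff₀ (sub_pos.mpr hx)]
  linarith

section Hilbert

variable {H : Type*} [NormedAddCommGroup H] [InnerProductSpace ℝ H] [CompleteSpace H]

theorem ContinuousLinearMap.IsPositive.le_of_mem_spectrum_add_smul_one {T : H →L[ℝ] H}
    (hT : T.IsPositive) {lam x : ℝ} (hx : x ∈ spectrum ℝ (T + lam • 1)) : lam ≤ x := by
  rw [← Algebra.algebraMap_eq_smul_one, add_comm, ← sub_add_cancel x lam,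
    spectrum.add_mem_add_iff] at hx
  linarith [SpectrumRestricts.nnreal_iff.mp hT.spectrumRestricts _ hx]

variable [ContinuousFunctionalCalculus ℝ (H →L[ℝ] H) (IsSelfAdjoint : (H →L[ℝ] H) → Prop)]

theorem opow_isSelfAdjoint (A : H →L[ℝ] H) (t : ℝ) : IsSelfAdjoint (opow A t) :=
  cfc_predicate _ A

theorem opow_zero {A : H →L[ℝ] H} (hA : IsSelfAdjoint A) : opow A 0 = 1 := by
  simp only [opow, Real.rpow_zero]
  exact cfc_const_one ℝ A

theorem opow_one {A : H →L[ℝ] H} (hA : IsSelfAdjoint A) : opow A 1 = A := by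
  simp only [opow, Real.rpow_one]
  exact cfc_id' ℝ A

theorem opow_add {A : H →L[ℝ] H} (hA : ∀ x ∈ spectrum ℝ A, 0 < x) (s t : ℝ) :
    opow A (s + t) = opow A s * opow A t := by
  have hcont (r : ℝ) : ContinuousOn (fun x : ℝ => x ^ r) (spectrum ℝ A) := fun x hx =>
    (Real.continuousAt_rpow_const x r (Or.inl (hA x hx).ne')).continuousWithinAt
  rw [opow, opow, opow, ← cfc_mul _ _ A (hcont s) (hcont t)]
  exact cfc_congr fun x hx => Real.rpow_add (hA x hx) s t

theorem opow_neg_mul_opow {A : H →L[ℝ] H} (hA : IsSelfAdjoint A)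
    (hA_spec : ∀ x ∈ spectrum ℝ A, 0 < x) (t : ℝ) : opow A (-t) * opow A t = 1 := by
  rw [← opow_add hA_spec, neg_add_cancel, opow_zero hA]

theorem opow_mul_opow_neg {A : H →L[ℝ] H} (hA : IsSelfAdjoint A)
    (hA_spec : ∀ x ∈ spectrum ℝ A, 0 < x) (t : ℝ) : opow A t * opow A (-t) = 1 := by
  rw [← opow_add hA_spec, add_neg_cancel, opow_zero hA]

theorem opow_neg_half_mul_mul_opow_neg_half {A : H →L[ℝ] H} (hA : IsSelfAdjoint A)
    (hA_spec : ∀ x ∈ spectrum ℝ A, 0 < x) : opow A (-(1 / 2)) * A * opow A (-(1 / 2)) = 1 := by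
  nth_rw 2 [← opow_one hA]
  rw [← opow_add hA_spec, ← opow_add hA_spec]
  norm_num [opow_zero hA]

theorem norm_opow_neg_half_mul_opow_half_sq_le {A B : H →L[ℝ] H} (hA : IsSelfAdjoint A)
    (hB : IsSelfAdjoint B) (hA_spec : ∀ x ∈ spectrum ℝ A, 0 < x)
    (hB_spec : ∀ x ∈ spectrum ℝ B, 0 < x) {r : ℝ} (hr : r < 1)
    (hAB : ‖opow A (-(1 / 2)) * (A - B) * opow A (-(1 / 2))‖ ≤ r) :
    ‖opow B (-(1 / 2)) * opow A (1 / 2)‖ ^ 2 ≤ 1 / (1 - r) := by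
  set R := opow A (-(1 / 2)) * (A - B) * opow A (-(1 / 2))
  set E := opow A (1 / 2) * opow B (-1) * opow A (1 / 2)
  have h_one_sub : 1 - R = opow A (-(1 / 2)) * B * opow A (-(1 / 2)) := by
    rw [← opow_neg_half_mul_mul_opow_neg_half hA hA_spec]
    simp only [R, mul_sub, sub_mul, sub_sub_cancel]
  have h_inv : (1 - R) * E = 1 := by
    have hB_inv : B * opow B (-1) = 1 := by
      nth_rw 1 [← opow_one hB]
      exact opow_mul_opow_neg hB hB_spec 1
    simp only [h_one_sub, E, mul_assoc]
    rw [← mul_assoc (opow A (-(1 / 2))) (opow A (1 / 2)), opow_neg_mul_opow hA hA_spec,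
      one_mul, ← mul_assoc B, hB_inv, one_mul, opow_neg_mul_opow hA hA_spec]
  have h_star : star (opow B (-(1 / 2)) * opow A (1 / 2)) * (opow B (-(1 / 2)) * opow A (1 / 2))
      = E := by
    rw [star_mul, (opow_isSelfAdjoint A _).star_eq, (opow_isSelfAdjoint B _).star_eq,
      mul_assoc, ← mul_assoc (opow B _), ← opow_add hB_spec, ← mul_assoc]
    norm_num [E]
  have hR : ‖R‖ < 1 := hAB.trans_lt hr
  calc ‖opow B (-(1 / 2)) * opow A (1 / 2)‖ ^ 2 = ‖E‖ := by
        rw [sq, ← CStarRing.norm_star_mul_self, h_star]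
    _ ≤ ‖(1 : H →L[ℝ] H)‖ / (1 - ‖R‖) := norm_le_of_one_sub_mul_eq_one hR h_inv
    _ ≤ 1 / (1 - r) := div_le_div₀ zero_le_one norm_id_le (by linarith) (by linarith)

end Hilbert

theorem stmt4_general
    {H : Type*} [NormedAddCommGroup H] [InnerProductSpace ℝ H] [CompleteSpace H]
    [ContinuousFunctionalCalculus ℝ (H →L[ℝ] H) (IsSelfAdjoint : (H →L[ℝ] H) → Prop)]
    (T S : H →L[ℝ] H) (hT : T.IsPositive) (hS : S.IsPositive)
    (lam : ℝ) (hlam : 0 < lam)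
    (hR : ‖opow (T + lam • 1) (-(1 / 2)) ∘L (T - S) ∘L opow (T + lam • 1) (-(1 / 2))‖
      ≤ 1 / 4) :
    ‖opow (S + lam • 1) (-(1 / 2)) ∘L opow (T + lam • 1) (1 / 2)‖ ≤ 2 * Real.sqrt 3 / 3 := by
  have h_shift : (lam • 1 : H →L[ℝ] H).IsPositive := isPositive_one.smul_of_nonneg hlam.le
  have h_sub : T + lam • 1 - (S + lam • 1) = T - S := add_sub_add_right_eq_sub T S _
  simp only [← mul_def, ← mul_assoc] at hR ⊢
  rw [← h_sub] at hR
  have h_sq := norm_opow_neg_half_mul_opow_half_sq_le (hT.add h_shift).isSelfAdjoint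
    (hS.add h_shift).isSelfAdjoint
    (fun x hx => hlam.trans_le (hT.le_of_mem_spectrum_add_smul_one hx))
    (fun x hx => hlam.trans_le (hS.le_of_mem_spectrum_add_smul_one hx)) (by norm_num) hR
  have h_bound_sq : (2 * Real.sqrt 3 / 3) ^ 2 = 1 / (1 - 1 / 4) := by
    rw [div_pow, mul_pow, Real.sq_sqrt zero_le_three]
    norm_num
  rw [← h_bound_sq] at h_sq
  exact (pow_le_pow_iff_left₀ (norm_nonneg _) (by positivity) two_ne_zero).mp h_sq

/-- the bound `Q_{D,λ} ≤ 2√3/3` under the event `R_{D,λ} ≤ 1/4`. -/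
theorem stmt4
    {H : Type*} [NormedAddCommGroup H] [InnerProductSpace ℝ H] [CompleteSpace H]
    [TopologicalSpace.SeparableSpace H]
    [ContinuousFunctionalCalculus ℝ (H →L[ℝ] H) (IsSelfAdjoint : (H →L[ℝ] H) → Prop)]
    (T S : H →L[ℝ] H) (hT : T.IsPositive) (hS : S.IsPositive)
    (lam : ℝ) (hlam : 0 < lam)
    (hR : ‖opow (T + lam • 1) (-(1 / 2)) ∘L (T - S) ∘L opow (T + lam • 1) (-(1 / 2))‖
      ≤ 1 / 4) :
    ‖opow (S + lam • 1) (-(1 / 2)) ∘L opow (T + lam • 1) (1 / 2)‖ ≤ 2 * Real.sqrt 3 / 3 :=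
  stmt4_general T S hT hS lam hlam hR
end

section
/- Let H be a real separable Hilbert space, let A and B be positive bounded linear operators on H, let μ > 0, let c > 0 and β > 0 be real numbers, and let n be a positive integer. If ‖A − B‖ ≤ c·n^{−β} and μ·n^{β} ≥ 2c, then ‖(B + μI)^{-1/2}(A + μI)^{1/2}‖ ≤ √2. -/
/-!
Write `a = A + μ`, `b = B + μ`, `P = a^{1/2}` and `Q = b^{-1/2}`. The C*-identity gives
`‖QP‖² = ‖QP(QP)*‖ = ‖QaQ‖ = ‖Q(A - B)Q + 1‖ ≤ ‖b⁻¹‖ ‖A - B‖ + 1`, and `‖b⁻¹‖ ≤ 1/μ` since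
`⟪b y, y⟫ ≥ μ‖y‖²`. The hypotheses force `‖A - B‖ ≤ μ/2`, hence `‖QP‖² ≤ 3/2 ≤ 2`.
-/

open ContinuousLinearMap

theorem spectrum.le_of_mem_add_algebraMap {R 𝒜 : Type*} [CommRing R] [PartialOrder R]
    [IsOrderedAddMonoid R] [Ring 𝒜] [Algebra R 𝒜] {a : 𝒜}
    (ha : ∀ x ∈ spectrum R a, 0 ≤ x) (r : R) :
    ∀ x ∈ spectrum R (a + algebraMap R 𝒜 r), r ≤ x := by
  rw [← spectrum.add_singleton_eq]
  rintro _ ⟨y, hy, z, rfl, rfl⟩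
  exact le_add_of_nonneg_left (ha y hy)

theorem CStarRing.norm_mul_sq_le {R : Type*} [NormedRing R] [StarRing R] [CStarRing R]
    {P Q : R} (hP : IsSelfAdjoint P) (hQ : IsSelfAdjoint Q) {a : R} (hPP : P * P = a) (b : R) :
    ‖Q * P‖ ^ 2 ≤ ‖Q‖ ^ 2 * ‖a - b‖ + ‖Q * b * Q‖ := by
  have hQaQ : Q * P * star (Q * P) = Q * (a - b) * Q + Q * b * Q := by
    rw [star_mul, hP.star_eq, hQ.star_eq, ← hPP]
    noncomm_ring
  calc ‖Q * P‖ ^ 2 = ‖Q * (a - b) * Q + Q * b * Q‖ := by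
        rw [sq, ← CStarRing.norm_self_mul_star, hQaQ]
    _ ≤ ‖Q‖ * ‖a - b‖ * ‖Q‖ + ‖Q * b * Q‖ :=
        (norm_add_le _ _).trans (add_le_add_left (norm_mul₃_le ..) _)
    _ = ‖Q‖ ^ 2 * ‖a - b‖ + ‖Q * b * Q‖ := by ring

section RealPowers

variable {𝒜 : Type*} [Ring 𝒜] [StarRing 𝒜] [TopologicalSpace 𝒜] [Algebra ℝ 𝒜]
  [ContinuousFunctionalCalculus ℝ 𝒜 IsSelfAdjoint] {b : 𝒜}

theorem cfc_rpow_mul_cfc_rpow (hb_pos : ∀ x ∈ spectrum ℝ b, 0 < x) (s t : ℝ) :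
    cfc (fun x : ℝ => x ^ s) b * cfc (fun x : ℝ => x ^ t) b =
      cfc (fun x : ℝ => x ^ (s + t)) b := by
  have hcont (r : ℝ) : ContinuousOn (fun x : ℝ => x ^ r) (spectrum ℝ b) :=
    continuousOn_id.rpow_const fun x hx => Or.inl (hb_pos x hx).ne'
  rw [← cfc_mul _ _ b (hcont s) (hcont t)]
  exact cfc_congr fun x hx => (Real.rpow_add (hb_pos x hx) s t).symm

theorem cfc_rpow_one (hb : IsSelfAdjoint b) : cfc (fun x : ℝ => x ^ (1 : ℝ)) b = b := by
  simp only [Real.rpow_one]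
  exact cfc_id' ℝ b

theorem cfc_rpow_zero (hb : IsSelfAdjoint b) : cfc (fun x : ℝ => x ^ (0 : ℝ)) b = 1 := by
  simp only [Real.rpow_zero]
  exact cfc_const_one ℝ b

theorem mul_cfc_rpow_neg_one (hb : IsSelfAdjoint b) (hb_pos : ∀ x ∈ spectrum ℝ b, 0 < x) :
    b * cfc (fun x : ℝ => x ^ (-1 : ℝ)) b = 1 := by
  conv_lhs => enter [1]; rw [← cfc_rpow_one hb]
  rw [cfc_rpow_mul_cfc_rpow hb_pos, add_neg_cancel, cfc_rpow_zero hb]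

end RealPowers

theorem norm_cfc_rpow_neg_half_mul_cfc_rpow_half_sq_le {𝒜 : Type*} [NormedRing 𝒜] [StarRing 𝒜]
    [CStarRing 𝒜] [Algebra ℝ 𝒜] [ContinuousFunctionalCalculus ℝ 𝒜 IsSelfAdjoint] {a b : 𝒜}
    (ha : IsSelfAdjoint a) (ha_pos : ∀ x ∈ spectrum ℝ a, 0 < x)
    (hb : IsSelfAdjoint b) (hb_pos : ∀ x ∈ spectrum ℝ b, 0 < x) :
    ‖cfc (fun x : ℝ => x ^ (-(1 / 2) : ℝ)) b * cfc (fun x : ℝ => x ^ (1 / 2 : ℝ)) a‖ ^ 2 ≤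
      ‖cfc (fun x : ℝ => x ^ (-1 : ℝ)) b‖ * ‖a - b‖ + ‖(1 : 𝒜)‖ := by
  set Q := cfc (fun x : ℝ => x ^ (-(1 / 2) : ℝ)) b
  have hPP : cfc (fun x : ℝ => x ^ (1 / 2 : ℝ)) a * cfc (fun x : ℝ => x ^ (1 / 2 : ℝ)) a = a := by
    rw [cfc_rpow_mul_cfc_rpow ha_pos, add_halves, cfc_rpow_one ha]
  have hQQ : ‖Q‖ ^ 2 = ‖cfc (fun x : ℝ => x ^ (-1 : ℝ)) b‖ := by
    rw [sq, ← CStarRing.norm_star_mul_self,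
      (cfc_predicate (fun x : ℝ => x ^ (-(1 / 2) : ℝ)) b).star_eq, cfc_rpow_mul_cfc_rpow hb_pos,
      ← neg_add, add_halves]
  have hQbQ : Q * b * Q = 1 := by
    conv_lhs => enter [1, 2]; rw [← cfc_rpow_one hb]
    rw [cfc_rpow_mul_cfc_rpow hb_pos, cfc_rpow_mul_cfc_rpow hb_pos,
      show -(1 / 2) + 1 + -(1 / 2) = (0 : ℝ) by norm_num, cfc_rpow_zero hb]
  calc _ ≤ ‖Q‖ ^ 2 * ‖a - b‖ + ‖Q * b * Q‖ :=
        CStarRing.norm_mul_sq_le (cfc_predicate _ a) (cfc_predicate _ b) hPP b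
    _ = _ := by rw [hQQ, hQbQ]

section Operators

variable {E : Type*} [NormedAddCommGroup E] [InnerProductSpace ℝ E]

theorem ContinuousLinearMap.norm_le_inv_of_mul_eq_one {b R : E →L[ℝ] E} {μ : ℝ} (hμ : 0 < μ)
    (hb : ∀ y, μ * ‖y‖ ≤ ‖b y‖) (hbR : b * R = 1) : ‖R‖ ≤ μ⁻¹ := by
  refine opNorm_le_bound R (inv_nonneg.mpr hμ.le) fun x => ?_
  have hx : b (R x) = x := congr($hbR x)
  rw [inv_mul_eq_div, le_div_iff₀' hμ]
  simpa [hx] using hb (R x)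

namespace ContinuousLinearMap.IsPositive

variable {B : E →L[ℝ] E} {μ : ℝ}

theorem mul_norm_le_norm_add_smul_one_apply (hB : B.IsPositive) (y : E) :
    μ * ‖y‖ ≤ ‖(B + μ • 1) y‖ := by
  rcases (norm_nonneg y).eq_or_lt with hy | hy
  · simp [← hy]
  have hinner : μ * ‖y‖ ^ 2 ≤ inner ℝ ((B + μ • 1) y) y := by
    simp only [add_apply, smul_apply, one_apply_eq_self, inner_add_left, real_inner_smul_left,
      real_inner_self_eq_norm_sq]
    linarith [hB.inner_nonneg_left y]
  have := hinner.trans (real_inner_le_norm _ _)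
  rw [sq, ← mul_assoc] at this
  exact le_of_mul_le_mul_right this hy

variable [CompleteSpace E]

theorem isSelfAdjoint_add_smul_one (hB : B.IsPositive) (hμ : 0 ≤ μ) :
    IsSelfAdjoint (B + μ • 1) :=
  (hB.add (isPositive_one.smul_of_nonneg hμ)).isSelfAdjoint

theorem pos_of_mem_spectrum_add_smul_one (hB : B.IsPositive) (hμ : 0 < μ) :
    ∀ x ∈ spectrum ℝ (B + μ • 1), 0 < x := by
  rw [← Algebra.algebraMap_eq_smul_one]
  exact fun x hx => hμ.trans_le <| spectrum.le_of_mem_add_algebraMap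
    (SpectrumRestricts.nnreal_iff.mp hB.spectrumRestricts) μ x hx

theorem norm_cfc_rpow_neg_one_add_smul_one_le
    [ContinuousFunctionalCalculus ℝ (E →L[ℝ] E) (IsSelfAdjoint : (E →L[ℝ] E) → Prop)]
    (hB : B.IsPositive) (hμ : 0 < μ) :
    ‖cfc (fun x : ℝ => x ^ (-1 : ℝ)) (B + μ • 1)‖ ≤ μ⁻¹ :=
  norm_le_inv_of_mul_eq_one hμ hB.mul_norm_le_norm_add_smul_one_apply <|
    mul_cfc_rpow_neg_one (hB.isSelfAdjoint_add_smul_one hμ.le)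
      (hB.pos_of_mem_spectrum_add_smul_one hμ)

end ContinuousLinearMap.IsPositive

end Operators

theorem stmt7_general
    {H : Type*} [NormedAddCommGroup H] [InnerProductSpace ℝ H] [CompleteSpace H]
    [ContinuousFunctionalCalculus ℝ (H →L[ℝ] H) (IsSelfAdjoint : (H →L[ℝ] H) → Prop)]
    (A B : H →L[ℝ] H) (hA : A.IsPositive) (hB : B.IsPositive)
    (mu c beta : ℝ) (hmu : 0 < mu)
    (n : ℕ) (hn : 0 < n)
    (hAB : ‖A - B‖ ≤ c * (n : ℝ) ^ (-beta))
    (hmun : 2 * c ≤ mu * (n : ℝ) ^ beta) :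
    ‖opow (B + mu • 1) (-(1 / 2)) ∘L opow (A + mu • 1) (1 / 2)‖ ≤ Real.sqrt 2 := by
  have hAB_le : ‖A - B‖ ≤ mu / 2 := by
    have hnβ : 0 < (n : ℝ) ^ beta := by positivity
    rw [Real.rpow_neg n.cast_nonneg, ← div_eq_mul_inv, le_div_iff₀ hnβ] at hAB
    exact le_of_mul_le_mul_right (by linarith) hnβ
  have key := norm_cfc_rpow_neg_half_mul_cfc_rpow_half_sq_le
    (hA.isSelfAdjoint_add_smul_one hmu.le) (hA.pos_of_mem_spectrum_add_smul_one hmu)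
    (hB.isSelfAdjoint_add_smul_one hmu.le) (hB.pos_of_mem_spectrum_add_smul_one hmu)
  rw [add_sub_add_right_eq_sub] at key
  refine Real.le_sqrt_of_sq_le (key.trans ?_)
  calc _ ≤ mu⁻¹ * (mu / 2) + 1 := by
        gcongr
        · exact hB.norm_cfc_rpow_neg_one_add_smul_one_le hmu
        · exact norm_id_le
    _ ≤ 2 := by
        rw [← mul_div_assoc, inv_mul_cancel₀ hmu.ne']
        norm_num

/-- the bound `Q_{Ξ_n,μ} ≤ √2` for low-discrepancy centers. -/
theorem stmt7
    {H : Type*} [NormedAddCommGroup H] [InnerProductSpace ℝ H] [CompleteSpace H]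
    [TopologicalSpace.SeparableSpace H]
    [ContinuousFunctionalCalculus ℝ (H →L[ℝ] H) (IsSelfAdjoint : (H →L[ℝ] H) → Prop)]
    (A B : H →L[ℝ] H) (hA : A.IsPositive) (hB : B.IsPositive)
    (mu c beta : ℝ) (hmu : 0 < mu) (hc : 0 < c) (hbeta : 0 < beta)
    (n : ℕ) (hn : 0 < n)
    (hAB : ‖A - B‖ ≤ c * (n : ℝ) ^ (-beta))
    (hmun : 2 * c ≤ mu * (n : ℝ) ^ beta) :
    ‖opow (B + mu • 1) (-(1 / 2)) ∘L opow (A + mu • 1) (1 / 2)‖ ≤ Real.sqrt 2 :=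
  stmt7_general A B hA hB mu c beta hmu n hn hAB hmun
end

section
/- Let H and K be separable Hilbert spaces, let S be a positive bounded linear operator on H, let V : K → H be a bounded linear operator with V*V = id_K, and let μ > 0. Then ‖(S + μI)^{1/2} V (V*SV + μ·id_K)^{-1} V* (S + μI)^{1/2}‖ ≤ 1. -/
/-!
Put `Q = (S + μ)^{1/2}` and `U = Q V`. Since `V* V = 1`, `U* U = V* (S + μ) V = V* S V + μ`,
so the operator in question is `U (U* U)⁻¹ U*`: a self-adjoint idempotent, i.e. an orthogonal
projection, whose norm is at most one.
-/

open ContinuousLinearMap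

namespace ContinuousLinearMap

variable {𝕜 E F : Type*} [RCLike 𝕜]
  [NormedAddCommGroup E] [InnerProductSpace 𝕜 E] [CompleteSpace E]
  [NormedAddCommGroup F] [InnerProductSpace 𝕜 F] [CompleteSpace F]

theorem IsPositive.isUnit_add_smul_one {P : E →L[𝕜] E} (hP : P.IsPositive) {c : ℝ} (hc : 0 < c) :
    IsUnit (P + (c : 𝕜) • 1) := by
  refine isUnit_of_forall_le_norm_inner_map _ (c := ⟨c, hc.le⟩) hc fun x => ?_
  calc ‖x‖ ^ 2 * c
      ≤ RCLike.re (inner 𝕜 (P x) x) + c * ‖x‖ ^ 2 := by nlinarith [hP.re_inner_nonneg_left x]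
    _ = RCLike.re (inner 𝕜 ((P + (c : 𝕜) • 1) x) x) := by
        simp [inner_add_left, inner_smul_left, inner_self_eq_norm_sq_to_K]
    _ ≤ ‖inner 𝕜 ((P + (c : 𝕜) • 1) x) x‖ := RCLike.re_le_norm _

theorem isStarProjection_comp_comp_adjoint {U : F →L[𝕜] E} {N : F →L[𝕜] F}
    (hN : IsSelfAdjoint N) (hNU : N ∘L (adjoint U ∘L U) = 1) :
    IsStarProjection (U ∘L N ∘L adjoint U) where
  isIdempotentElem := by
    calc (U ∘L N ∘L adjoint U) ∘L (U ∘L N ∘L adjoint U)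
        = U ∘L (N ∘L (adjoint U ∘L U)) ∘L N ∘L adjoint U := by simp only [comp_assoc]
      _ = U ∘L N ∘L adjoint U := by rw [hNU, one_def, id_comp]
  isSelfAdjoint := by
    rw [isSelfAdjoint_iff', adjoint_comp, adjoint_comp, adjoint_adjoint, hN.adjoint_eq,
      comp_assoc]

end ContinuousLinearMap

section opow

variable {E : Type*} [NormedAddCommGroup E] [InnerProductSpace ℝ E] [CompleteSpace E]
  [ContinuousFunctionalCalculus ℝ (E →L[ℝ] E) (IsSelfAdjoint : (E →L[ℝ] E) → Prop)]

theorem isSelfAdjoint_opow (A : E →L[ℝ] E) (t : ℝ) : IsSelfAdjoint (opow A t) :=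
  cfc_predicate _ _

theorem opow_half_comp_self {A : E →L[ℝ] E} (hA : A.IsPositive) :
    opow A (1 / 2) ∘L opow A (1 / 2) = A := by
  have hspec : ∀ x ∈ spectrum ℝ A, 0 ≤ x := SpectrumRestricts.nnreal_iff.mp hA.spectrumRestricts
  rw [← mul_def, opow, ← cfc_mul _ _ A (Real.continuous_rpow_const (by norm_num)).continuousOn
    (Real.continuous_rpow_const (by norm_num)).continuousOn]
  conv_rhs => rw [← cfc_id ℝ A hA.isSelfAdjoint]
  exact cfc_congr fun x hx => by rw [← Real.rpow_add' (hspec x hx) (by norm_num)]; norm_num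

theorem opow_neg_one_comp_self {M : E →L[ℝ] E} (hM : IsSelfAdjoint M) (hMu : IsUnit M) :
    opow M (-1) ∘L M = 1 := by
  have : opow M (-1) = Ring.inverse M :=
    (cfc_congr fun x _ => Real.rpow_neg_one x).trans (cfc_ringInverse_id M hMu hM)
  rw [← mul_def, this, Ring.inverse_mul_cancel M hMu]

end opow

theorem stmt8_general
    {H K : Type*}
    [NormedAddCommGroup H] [InnerProductSpace ℝ H] [CompleteSpace H]
    [NormedAddCommGroup K] [InnerProductSpace ℝ K] [CompleteSpace K]
    [ContinuousFunctionalCalculus ℝ (H →L[ℝ] H) (IsSelfAdjoint : (H →L[ℝ] H) → Prop)]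
    [ContinuousFunctionalCalculus ℝ (K →L[ℝ] K) (IsSelfAdjoint : (K →L[ℝ] K) → Prop)]
    (S : H →L[ℝ] H) (hS : S.IsPositive)
    (V : K →L[ℝ] H) (hV : adjoint V ∘L V = 1)
    (mu : ℝ) (hmu : 0 < mu) :
    ‖opow (S + mu • 1) (1 / 2) ∘L V ∘L opow (adjoint V ∘L S ∘L V + mu • 1) (-1) ∘L
        adjoint V ∘L opow (S + mu • 1) (1 / 2)‖ ≤ 1 := by
  set A := S + mu • (1 : H →L[ℝ] H)
  set M := adjoint V ∘L S ∘L V + mu • (1 : K →L[ℝ] K)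
  set Q := opow A (1 / 2)
  have hA : A.IsPositive := hS.add (isPositive_one.smul_of_nonneg hmu.le)
  have hP := hS.adjoint_conj V
  have hM : M.IsPositive := hP.add (isPositive_one.smul_of_nonneg hmu.le)
  have hQV : adjoint (Q ∘L V) ∘L (Q ∘L V) = M := by
    rw [adjoint_comp, (isSelfAdjoint_opow A _).adjoint_eq]
    calc adjoint V ∘L Q ∘L Q ∘L V = adjoint V ∘L (Q ∘L Q) ∘L V := by simp only [comp_assoc]
      _ = M := by
        rw [opow_half_comp_self hA]
        simp only [A, M, add_comp, comp_add, smul_comp, comp_smul, one_def, id_comp, hV]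
  have hproj : IsStarProjection ((Q ∘L V) ∘L opow M (-1) ∘L adjoint (Q ∘L V)) :=
    isStarProjection_comp_comp_adjoint (isSelfAdjoint_opow M (-1)) <| by
      rw [hQV]; exact opow_neg_one_comp_self hM.isSelfAdjoint (hP.isUnit_add_smul_one hmu)
  rw [adjoint_comp, (isSelfAdjoint_opow A _).adjoint_eq] at hproj
  simpa only [comp_assoc] using hproj.norm_le

/-- contraction property of the Nyström resolvent. -/
theorem stmt8
    {H K : Type*}
    [NormedAddCommGroup H] [InnerProductSpace ℝ H] [CompleteSpace H]
    [TopologicalSpace.SeparableSpace H]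
    [NormedAddCommGroup K] [InnerProductSpace ℝ K] [CompleteSpace K]
    [TopologicalSpace.SeparableSpace K]
    [ContinuousFunctionalCalculus ℝ (H →L[ℝ] H) (IsSelfAdjoint : (H →L[ℝ] H) → Prop)]
    [ContinuousFunctionalCalculus ℝ (K →L[ℝ] K) (IsSelfAdjoint : (K →L[ℝ] K) → Prop)]
    (S : H →L[ℝ] H) (hS : S.IsPositive)
    (V : K →L[ℝ] H) (hV : adjoint V ∘L V = 1)
    (mu : ℝ) (hmu : 0 < mu) :
    ‖opow (S + mu • 1) (1 / 2) ∘L V ∘L opow (adjoint V ∘L S ∘L V + mu • 1) (-1) ∘L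
        adjoint V ∘L opow (S + mu • 1) (1 / 2)‖ ≤ 1 :=
  stmt8_general S hS V hV mu hmu
end
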